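/- The function t ↦ −log(log(1 + e^t)) is convex on the real line. Consequently, for each fixed x ∈ ℝ^M, the function w ↦ −log(log(1 + e^{⟨w, x⟩})) is convex on ℝ^M. -/

import Mathlib

/-!
Writing `v = 1 + eᵗ`, the derivative of `t ↦ -log (log (1 + eᵗ))` is
`-(v - 1) / (v log v) = -1 / s(v)`, where `s(v) = v log v / (v - 1)` is the slope of the
convex function `x ↦ x log x` between `1` and `v`. Slopes of a convex function from a fixed point
increase, so the derivative is monotone; precomposing with the linear form `w ↦ ⟪w, x⟫`
preserves convexity.
-/

open Real Set

theorem hasDerivAt_neg_log_log_one_add_exp (t : ℝ) :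
    HasDerivAt (fun t => -log (log (1 + exp t)))
      (-(exp t / ((1 + exp t) * log (1 + exp t)))) t := by
  have hlog : log (1 + exp t) ≠ 0 := (log_pos (by linarith [exp_pos t])).ne'
  refine ((((hasDerivAt_exp t).const_add 1).log (by positivity)).log hlog).fun_neg.congr_deriv ?_
  rw [div_div]

theorem monotone_one_add_exp_mul_log_div_exp :
    Monotone fun t => (1 + exp t) * log (1 + exp t) / exp t := by
  intro s t hst
  have hmem : ∀ u : ℝ, 1 + exp u ∈ Ici 0 := fun u => mem_Ici.2 (by positivity)
  have hne : ∀ u : ℝ, 1 + exp u ≠ 1 := fun u => by simp [(exp_pos u).ne']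
  simpa using convexOn_mul_log.secant_mono (a := 1) (by simp) (hmem s) (hmem t) (hne s) (hne t)
    (by gcongr)

theorem convexOn_neg_log_log_one_add_exp :
    ConvexOn ℝ univ fun t => -log (log (1 + exp t)) := by
  refine Monotone.convexOn_univ_of_deriv
    (fun t => (hasDerivAt_neg_log_log_one_add_exp t).differentiableAt) fun s t hst => ?_
  have hpos : 0 < (1 + exp s) * log (1 + exp s) / exp s :=
    div_pos (mul_pos (by positivity) (log_pos (by linarith [exp_pos s]))) (exp_pos s)
  rw [(hasDerivAt_neg_log_log_one_add_exp s).deriv, (hasDerivAt_neg_log_log_one_add_exp t).deriv,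
    neg_le_neg_iff]
  simpa only [inv_div] using inv_anti₀ hpos (monotone_one_add_exp_mul_log_div_exp hst)

/-- The function `t ↦ −log (log (1 + e^t))` is convex on the real line; consequently, for each
fixed `x ∈ ℝ^M`, the function `w ↦ −log (log (1 + e^{⟨w, x⟩}))` is convex on `ℝ^M`. -/
theorem neg_log_softplus_convexOn :
    ConvexOn ℝ Set.univ (fun t : ℝ => -Real.log (Real.log (1 + Real.exp t))) ∧
    ∀ (M : ℕ) (x : EuclideanSpace ℝ (Fin M)),
      ConvexOn ℝ Set.univ
        (fun w : EuclideanSpace ℝ (Fin M) =>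
          -Real.log (Real.log (1 + Real.exp (inner ℝ w x : ℝ)))) :=
  ⟨convexOn_neg_log_log_one_add_exp, fun _ x =>
    convexOn_neg_log_log_one_add_exp.comp_linearMap ((innerₗ _).flip x)⟩
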